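/- Let s_k = (3/(4k), 3/(4k) − 1/(2k²)) for k ≥ 1, and let R be the convex hull of {s_k : k ≥ 1} ∪ {(0,0), (1,0)}. Then every point (x, y) in the interior of R lies either in the interior of the triangle with vertices (1,0), s_k, s_{k+1} for some k ≥ 1, or in the relative interior of the segment from s_k to (1,0) for some k ≥ 1. -/

import Mathlib

noncomputable def triCr (u v w : ℝ × ℝ) : ℝ :=
  (v.1 - u.1) * (w.2 - u.2) - (v.2 - u.2) * (w.1 - u.1)


lemma frt_hull_halfspace {S : Set (ℝ × ℝ)} {a b c : ℝ}
    (h : ∀ v ∈ S, a * v.1 + b * v.2 ≤ c) :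
    ∀ q ∈ convexHull ℝ S, a * q.1 + b * q.2 ≤ c := by
  have hconv : Convex ℝ {q : ℝ × ℝ | a * q.1 + b * q.2 ≤ c} := by
    refine convex_halfSpace_le ⟨?_, ?_⟩ c
    · intro x y; simp; ring
    · intro r x; simp; ring
  exact fun q hq => convexHull_min h hconv hq

lemma frt_interior_halfspace {R : Set (ℝ × ℝ)} {a b c : ℝ} (hab : 0 < a ^ 2 + b ^ 2)
    (h : ∀ q ∈ R, a * q.1 + b * q.2 ≤ c) {p : ℝ × ℝ} (hp : p ∈ interior R) :
    a * p.1 + b * p.2 < c := by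
  rcases Metric.isOpen_iff.1 isOpen_interior p hp with ⟨ε, hε, hball⟩
  set n : ℝ := |a| + |b| with hn
  have hn0 : 0 < n := by
    rcases lt_or_ge 0 (|a| + |b|) with h' | h'
    · exact h'
    · exfalso; nlinarith [abs_nonneg a, abs_nonneg b, sq_abs a, sq_abs b]
  set t : ℝ := ε / (2 * n) with ht
  have ht0 : 0 < t := by positivity
  have hq : (p.1 + t * a, p.2 + t * b) ∈ R := by
    apply interior_subset
    apply hball
    rw [Metric.mem_ball, Prod.dist_eq]
    have h1 : dist (p.1 + t * a) p.1 = t * |a| := by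
      rw [Real.dist_eq, show p.1 + t * a - p.1 = t * a by ring, abs_mul, abs_of_pos ht0]
    have h2 : dist (p.2 + t * b) p.2 = t * |b| := by
      rw [Real.dist_eq, show p.2 + t * b - p.2 = t * b by ring, abs_mul, abs_of_pos ht0]
    rw [sup_lt_iff, h1, h2]
    constructor <;>
    · rw [ht, div_mul_eq_mul_div, div_lt_iff₀ (by positivity)]
      nlinarith [abs_nonneg a, abs_nonneg b]
  have := h _ hq
  simp only at this
  nlinarith


lemma frt_mem_interior_triangle {A B C p : ℝ × ℝ}
    (h1 : 0 < triCr A B p) (h2 : 0 < triCr B C p) (h3 : 0 < triCr C A p) :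
    p ∈ interior (convexHull ℝ {A, B, C}) := by
  set U : Set (ℝ × ℝ) := {q | 0 < triCr A B q ∧ 0 < triCr B C q ∧ 0 < triCr C A q} with hU
  have hUopen : IsOpen U := by
    have o1 : IsOpen {q : ℝ × ℝ | 0 < triCr A B q} := by
      apply isOpen_lt continuous_const; unfold triCr; fun_prop
    have o2 : IsOpen {q : ℝ × ℝ | 0 < triCr B C q} := by
      apply isOpen_lt continuous_const; unfold triCr; fun_prop
    have o3 : IsOpen {q : ℝ × ℝ | 0 < triCr C A q} := by
      apply isOpen_lt continuous_const; unfold triCr; fun_prop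
    exact o1.and (o2.and o3)
  have hsub : U ⊆ convexHull ℝ {A, B, C} := by
    rintro q ⟨hq1, hq2, hq3⟩
    have hsum : triCr B C q + triCr C A q + triCr A B q = triCr A B C := by
      unfold triCr; ring
    have hΔ : 0 < triCr A B C := by linarith
    have hne : triCr A B C ≠ 0 := ne_of_gt hΔ
    have hAm : A ∈ convexHull ℝ ({A, B, C} : Set (ℝ × ℝ)) :=
      subset_convexHull ℝ _ (by simp)
    have hBm : B ∈ convexHull ℝ ({A, B, C} : Set (ℝ × ℝ)) :=
      subset_convexHull ℝ _ (by simp)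
    have hCm : C ∈ convexHull ℝ ({A, B, C} : Set (ℝ × ℝ)) :=
      subset_convexHull ℝ _ (by simp)
    have key : q = (triCr B C q / triCr A B C) • A + (triCr C A q / triCr A B C) • B
        + (triCr A B q / triCr A B C) • C := by
      have e1 : q.1 = (triCr B C q / triCr A B C) * A.1 + (triCr C A q / triCr A B C) * B.1
          + (triCr A B q / triCr A B C) * C.1 := by
        field_simp
        unfold triCr; ring
      have e2 : q.2 = (triCr B C q / triCr A B C) * A.2 + (triCr C A q / triCr A B C) * B.2
          + (triCr A B q / triCr A B C) * C.2 := by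
        field_simp
        unfold triCr; ring
      ext
      · simpa using e1
      · simpa using e2
    set w1 := triCr B C q / triCr A B C with hw1
    set w2 := triCr C A q / triCr A B C with hw2
    set w3 := triCr A B q / triCr A B C with hw3
    have hw1p : 0 < w1 := by positivity
    have hw2p : 0 < w2 := by positivity
    have hw3p : 0 < w3 := by positivity
    have hwsum : w1 + w2 + w3 = 1 := by
      rw [hw1, hw2, hw3, ← add_div, ← add_div, div_eq_one_iff_eq hne]
      exact hsum
    set t := w2 + w3 with htdef
    have htp : 0 < t := by positivity
    have hm : (w2 / t) • B + (w3 / t) • C ∈ convexHull ℝ ({A, B, C} : Set (ℝ × ℝ)) := by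
      refine (convex_convexHull ℝ _) hBm hCm (by positivity) (by positivity) ?_
      field_simp
      linarith
    have hq' : q = w1 • A + t • ((w2 / t) • B + (w3 / t) • C) := by
      rw [key, smul_add, smul_smul, smul_smul,
        mul_div_cancel₀ _ (ne_of_gt htp), mul_div_cancel₀ _ (ne_of_gt htp), add_assoc]
    rw [hq']
    exact (convex_convexHull ℝ _) hAm hm (le_of_lt hw1p) (le_of_lt htp) (by linarith)
  exact (hUopen.subset_interior_iff.mpr hsub) ⟨h1, h2, h3⟩


lemma frt_gen {s : ℕ → ℝ × ℝ}
    (hs : ∀ k, 1 ≤ k → s k = ((3 : ℝ) / (4 * k), 3 / (4 * k) - 1 / (2 * (k : ℝ) ^ 2)))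
    {a b c : ℝ} (h0 : 0 ≤ c) (h1 : a ≤ c)
    (hk : ∀ m : ℕ, 1 ≤ m →
      a * (3 / (4 * (m : ℝ))) + b * (3 / (4 * (m : ℝ)) - 1 / (2 * (m : ℝ) ^ 2)) ≤ c) :
    ∀ v ∈ (Set.range fun k : ℕ => s (k + 1)) ∪ {((0 : ℝ), (0 : ℝ)), ((1 : ℝ), (0 : ℝ))},
      a * v.1 + b * v.2 ≤ c := by
  rintro v (⟨j, rfl⟩ | hv)
  · simp only
    rw [hs (j + 1) (by omega)]
    simpa using hk (j + 1) (by omega)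
  · rcases hv with rfl | rfl
    · simpa using h0
    · simpa using h1

set_option maxHeartbeats 1000000 in
/-- Every interior point of the feasible region `R` lies in the interior of a triangle
with vertices `(1,0)`, `s_k`, `s_{k+1}`, or in the open segment from `s_k` to `(1,0)`. -/
theorem feasible_region_triangulation
    (s : ℕ → ℝ × ℝ)
    (hs : ∀ k, 1 ≤ k → s k = ((3 : ℝ) / (4 * k), 3 / (4 * k) - 1 / (2 * (k : ℝ) ^ 2)))
    (R : Set (ℝ × ℝ))
    (hR : R = convexHull ℝ
        ((Set.range fun k : ℕ => s (k + 1)) ∪ {((0 : ℝ), (0 : ℝ)), ((1 : ℝ), (0 : ℝ))})) :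
    ∀ p ∈ interior R, ∃ k : ℕ, 1 ≤ k ∧
      (p ∈ interior (convexHull ℝ {((1 : ℝ), (0 : ℝ)), s k, s (k + 1)}) ∨
        p ∈ openSegment ℝ (s k) (((1 : ℝ), (0 : ℝ)))) := by
  intro p hp
  subst hR
  -- basic strict inequalities at the interior point
  have hp2 : 0 < p.2 := by
    have h := frt_interior_halfspace (a := 0) (b := -1) (c := 0) (by norm_num)
      (frt_hull_halfspace (frt_gen hs (by norm_num) (by norm_num) ?_)) hp
    · nlinarith
    · intro m hm
      have hm1 : (1 : ℝ) ≤ (m : ℝ) := by exact_mod_cast hm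
      have hc : (0:ℝ) < 4 * (m:ℝ) ^ 2 := by positivity
      have key : (3 / (4 * (m:ℝ)) - 1 / (2 * (m:ℝ) ^ 2)) * (4 * (m:ℝ) ^ 2)
          = 3 * (m:ℝ) - 2 := by
        field_simp
        ring
      nlinarith [key, hc]
  have hx1 : p.1 < 1 := by
    have h := frt_interior_halfspace (a := 1) (b := 0) (c := 1) (by norm_num)
      (frt_hull_halfspace (frt_gen hs (by norm_num) (by norm_num) ?_)) hp
    · nlinarith
    · intro m hm
      have hm1 : (1 : ℝ) ≤ (m : ℝ) := by exact_mod_cast hm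
      have hc : (0:ℝ) < 4 * (m:ℝ) := by positivity
      have key : (3 / (4 * (m:ℝ))) * (4 * (m:ℝ)) = 3 := by
        field_simp
      nlinarith [key, hc]
  have hx0 : 0 ≤ p.1 := by
    have h := frt_hull_halfspace (frt_gen hs (a := -1) (b := 0) (c := 0)
      (by norm_num) (by norm_num) ?_) p (interior_subset hp)
    · nlinarith
    · intro m hm
      have hm1 : (1 : ℝ) ≤ (m : ℝ) := by exact_mod_cast hm
      have h3 : 0 ≤ 3 / (4 * (m:ℝ)) := by positivity
      nlinarith
  have hxy : p.1 + p.2 < 1 := by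
    have h := frt_interior_halfspace (a := 1) (b := 1) (c := 1) (by norm_num)
      (frt_hull_halfspace (frt_gen hs (by norm_num) (by norm_num) ?_)) hp
    · nlinarith
    · intro m hm
      have hm1 : (1 : ℝ) ≤ (m : ℝ) := by exact_mod_cast hm
      have hc : (0:ℝ) < 2 * (m:ℝ) ^ 2 := by positivity
      have key : (1 - (1 * (3 / (4 * (m:ℝ))) + 1 * (3 / (4 * (m:ℝ)) - 1 / (2 * (m:ℝ) ^ 2))))
          * (2 * (m:ℝ) ^ 2) = (2 * (m:ℝ) - 1) * ((m:ℝ) - 1) := by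
        field_simp
        ring
      nlinarith [key, hc, sq_nonneg ((m:ℝ) - 1)]
  -- the supporting lines through s_k and s_{k+1}
  have hL : ∀ k : ℕ, 1 ≤ k →
      p.2 < (3 * (k:ℝ) + 2) * ((k:ℝ) - 1) / (3 * (k:ℝ) * ((k:ℝ) + 1)) * p.1
        + 1 / (2 * (k:ℝ) * ((k:ℝ) + 1)) := by
    intro k hk
    have hk1 : (1 : ℝ) ≤ (k : ℝ) := by exact_mod_cast hk
    set al : ℝ := (3 * (k:ℝ) + 2) * ((k:ℝ) - 1) / (3 * (k:ℝ) * ((k:ℝ) + 1)) with hal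
    set be : ℝ := 1 / (2 * (k:ℝ) * ((k:ℝ) + 1)) with hbe
    have hbe0 : 0 < be := by positivity
    have hal0 : 0 ≤ al := by
      apply div_nonneg _ (by positivity)
      nlinarith
    have h := frt_interior_halfspace (a := -al) (b := 1) (c := be)
      (by positivity) (frt_hull_halfspace (frt_gen hs ?_ ?_ ?_)) hp
    · nlinarith
    · linarith
    · simpa using by linarith
    · intro m hm
      have hm1 : (1 : ℝ) ≤ (m : ℝ) := by exact_mod_cast hm
      have key : (-al * (3 / (4 * (m:ℝ))) + 1 * (3 / (4 * (m:ℝ)) - 1 / (2 * (m:ℝ) ^ 2)) - be)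
          * (-(2 * (m:ℝ) ^ 2 * (k:ℝ) * ((k:ℝ) + 1))) = ((m:ℝ) - (k:ℝ)) * ((m:ℝ) - (k:ℝ) - 1) := by
        rw [hal, hbe]
        field_simp
        ring
      have hsign : 0 ≤ ((m:ℝ) - (k:ℝ)) * ((m:ℝ) - (k:ℝ) - 1) := by
        rcases le_or_gt m k with hmk | hmk
        · have : (m:ℝ) ≤ (k:ℝ) := by exact_mod_cast hmk
          nlinarith
        · have : (k:ℝ) + 1 ≤ (m:ℝ) := by exact_mod_cast hmk
          nlinarith
      have hc : (0:ℝ) < 2 * (m:ℝ) ^ 2 * (k:ℝ) * ((k:ℝ) + 1) := by positivity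
      nlinarith [key, hsign, hc]
  -- the fan of chords from (1,0) to s_n
  classical
  set D : ℕ → ℝ := fun n =>
    (3 / (4 * (n:ℝ)) - 1) * p.2 - (3 / (4 * (n:ℝ)) - 1 / (2 * (n:ℝ) ^ 2)) * (p.1 - 1) with hD
  have hD1 : 0 < D 1 := by
    simp only [hD]
    norm_num
    linarith
  have hEx : ∃ n, 1 ≤ n ∧ D n < 0 := by
    obtain ⟨N, hN⟩ := exists_nat_gt (3 * (p.2 + 1) / (4 * p.2))
    refine ⟨N + 1, by omega, ?_⟩
    have hm1 : (1:ℝ) ≤ ((N + 1 : ℕ) : ℝ) := by exact_mod_cast Nat.one_le_iff_ne_zero.mpr (by omega)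
    set m : ℝ := ((N + 1 : ℕ) : ℝ) with hm
    have hmb : 3 * (p.2 + 1) / (4 * p.2) < m := lt_of_lt_of_le hN (by rw [hm]; push_cast; linarith)
    have hmb' : 3 * (p.2 + 1) < 4 * p.2 * m := by
      rw [div_lt_iff₀ (by positivity)] at hmb; linarith
    have hm0 : m ≠ 0 := by positivity
    have key : D (N + 1) * (4 * m ^ 2) = (3 * m - 4 * m ^ 2) * p.2 - (3 * m - 2) * (p.1 - 1) := by
      have hDv : D (N + 1) = (3 / (4 * m) - 1) * p.2
          - (3 / (4 * m) - 1 / (2 * m ^ 2)) * (p.1 - 1) := by rw [hD]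
      rw [hDv]
      field_simp
      ring
    have hc : (0:ℝ) < 4 * m ^ 2 := by positivity
    nlinarith [key, hc, mul_nonneg (by linarith : (0:ℝ) ≤ 3 * m - 2) hx0,
      mul_lt_mul_of_pos_left hmb' (by linarith : (0:ℝ) < m)]
  set K := Nat.find hEx with hK
  obtain ⟨hK1, hDK⟩ : 1 ≤ K ∧ D K < 0 := Nat.find_spec hEx
  set k := K - 1 with hkdef
  have hk1 : 1 ≤ k := by
    rcases Nat.lt_or_ge K 2 with h2 | h2
    · exfalso
      have hKeq : K = 1 := by omega
      rw [hKeq] at hDK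
      linarith
    · omega
  have hKk : K = k + 1 := by omega
  have hDk : 0 ≤ D k := by
    have hmin := Nat.find_min hEx (show k < K by omega)
    push_neg at hmin
    exact hmin hk1
  have hkr1 : (1:ℝ) ≤ (k:ℝ) := by exact_mod_cast hk1
  have hsk : s k = (3 / (4 * (k:ℝ)), 3 / (4 * (k:ℝ)) - 1 / (2 * (k:ℝ) ^ 2)) := hs k hk1
  have hsk1 : s (k + 1) = (3 / (4 * ((k:ℝ) + 1)),
      3 / (4 * ((k:ℝ) + 1)) - 1 / (2 * ((k:ℝ) + 1) ^ 2)) := by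
    rw [hs (k + 1) (by omega)]
    push_cast
    ring_nf
  have hLk := hL k hk1
  have hbe0 : (0:ℝ) < 1 / (2 * (k:ℝ) * ((k:ℝ) + 1)) := by positivity
  have hal0 : (0:ℝ) ≤ (3 * (k:ℝ) + 2) * ((k:ℝ) - 1) / (3 * (k:ℝ) * ((k:ℝ) + 1)) := by
    apply div_nonneg _ (by positivity)
    nlinarith
  have hDkval : D k = (3 / (4 * (k:ℝ)) - 1) * p.2
      - (3 / (4 * (k:ℝ)) - 1 / (2 * (k:ℝ) ^ 2)) * (p.1 - 1) := by simp only [hD]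
  have hDk1val : D (k + 1) = (3 / (4 * ((k:ℝ) + 1)) - 1) * p.2
      - (3 / (4 * ((k:ℝ) + 1)) - 1 / (2 * ((k:ℝ) + 1) ^ 2)) * (p.1 - 1) := by
    simp only [hD]
    push_cast
    ring
  have hyk : 0 < 3 / (4 * (k:ℝ)) - 1 / (2 * (k:ℝ) ^ 2) := by
    have hc : (0:ℝ) < 4 * (k:ℝ) ^ 2 := by positivity
    have key : (3 / (4 * (k:ℝ)) - 1 / (2 * (k:ℝ) ^ 2)) * (4 * (k:ℝ) ^ 2) = 3 * (k:ℝ) - 2 := by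
      field_simp
      ring
    nlinarith [key, hc]
  refine ⟨k, hk1, ?_⟩
  rcases eq_or_lt_of_le hDk with heq | hlt
  · -- p lies on the open chord from s_k to (1,0)
    right
    rw [hDkval] at heq
    set xk : ℝ := 3 / (4 * (k:ℝ)) with hxk
    set yk : ℝ := 3 / (4 * (k:ℝ)) - 1 / (2 * (k:ℝ) ^ 2) with hykdef
    set al : ℝ := (3 * (k:ℝ) + 2) * ((k:ℝ) - 1) / (3 * (k:ℝ) * ((k:ℝ) + 1)) with hal
    set be : ℝ := 1 / (2 * (k:ℝ) * ((k:ℝ) + 1)) with hbe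
    have hyp1 : yk * p.1 = yk + (xk - 1) * p.2 := by linear_combination heq
    have touch : al * xk + be = yk := by
      rw [hal, hbe, hykdef, hxk]
      field_simp
      ring
    set a : ℝ := p.2 / yk with ha
    have ha0 : 0 < a := div_pos hp2 hyk
    have h1 : 0 < (al * p.1 + be - p.2) * yk := mul_pos (by linarith) hyk
    have h2 : (al * p.1 + be - p.2) * yk = (yk - p.2) * (al + be) := by
      linear_combination al * hyp1 + p.2 * touch
    have h3 : 0 < yk - p.2 := by nlinarith [h1, h2, hbe0, hal0]
    have ha1 : a < 1 := by
      rw [ha, div_lt_one hyk]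
      linarith
    refine ⟨a, 1 - a, ha0, by linarith, by ring, ?_⟩
    rw [hsk]
    have hayk : a * yk = p.2 := div_mul_cancel₀ _ (ne_of_gt hyk)
    rw [Prod.ext_iff]
    constructor
    · show a * xk + (1 - a) * 1 = p.1
      have hz : (a * xk + (1 - a) * 1 - p.1) * yk = 0 := by
        linear_combination xk * hayk - hayk - hyp1
      rcases mul_eq_zero.mp hz with h | h
      · linarith
      · exact absurd h (ne_of_gt hyk)
    · show a * yk + (1 - a) * 0 = p.2
      linarith [hayk]
  · -- p lies in the interior of the triangle
    left
    apply frt_mem_interior_triangle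
    · -- side from (1,0) to s_k
      have e1 : triCr ((1:ℝ), (0:ℝ)) (s k) p = D k := by
        rw [hsk, hDkval]
        simp only [triCr]
        ring
      rw [e1]
      exact hlt
    · -- side from s_k to s_{k+1}
      have hc : (0:ℝ) < 4 * (k:ℝ) * ((k:ℝ) + 1) := by positivity
      have e2 : triCr (s k) (s (k + 1)) p * (4 * (k:ℝ) * ((k:ℝ) + 1))
          = 3 * ((3 * (k:ℝ) + 2) * ((k:ℝ) - 1) / (3 * (k:ℝ) * ((k:ℝ) + 1)) * p.1
            + 1 / (2 * (k:ℝ) * ((k:ℝ) + 1)) - p.2) := by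
        rw [hsk, hsk1]
        simp only [triCr]
        field_simp
        ring
      nlinarith [e2, hLk, hc]
    · -- side from s_{k+1} to (1,0)
      have hDk1 : D (k + 1) < 0 := by rw [← hKk]; exact hDK
      have e3 : triCr (s (k + 1)) ((1:ℝ), (0:ℝ)) p = -D (k + 1) := by
        rw [hsk1, hDk1val]
        simp only [triCr]
        ring
      rw [e3]
      linarith
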